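/- Assume d ≥ 2 and let δ > 0 be such that 2·q(δ) ≤ c. Then ⟪g(δ), v₁⟫ ≥ (1 − (1/2)·(3·q(δ)/c)²) · ‖g(δ)‖, i.e., the cosine of the angle between g(δ) and ∇S(x_t) is at least 1 − (1/2)·(3q(δ)/c)² whenever g(δ) ≠ 0. -/

import Mathlib

open MeasureTheory Metric Filter
open scoped RealInnerProductSpace ENNReal

/-- sign(t) = 1 if t > 0 and -1 otherwise. -/
noncomputable def sgn (t : ℝ) : ℝ := if 0 < t then 1 else -1

/-- The uniform probability measure on the unit sphere of `EuclideanSpace ℝ (Fin d)`: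
the (d-1)-dimensional Hausdorff measure restricted to the sphere, normalized to mass 1. -/
noncomputable def sphereUniform (d : ℕ) : Measure (EuclideanSpace ℝ (Fin d)) :=
  (μH[(d : ℝ) - 1] (Metric.sphere (0 : EuclideanSpace ℝ (Fin d)) 1))⁻¹ •
    (μH[(d : ℝ) - 1]).restrict (Metric.sphere (0 : EuclideanSpace ℝ (Fin d)) 1)

/-- The population gradient-direction estimate
`g(δ) = ∫_S sign(S (x_t + δ u)) · u dσ(u)`. -/
noncomputable def gEst (d : ℕ) (S : EuclideanSpace ℝ (Fin d) → ℝ)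
    (xt : EuclideanSpace ℝ (Fin d)) (δ : ℝ) : EuclideanSpace ℝ (Fin d) :=
  ∫ u, sgn (S (xt + δ • u)) • u ∂(sphereUniform d)


/-!
Off the band `|⟪∇S(x_t), u⟫| ≤ Lδ/2`, the second-order Taylor bound for an `L`-smooth `S` forces
`sign S(x_t + δu) = sign ⟪v₁, u⟫`, so the deficit `c - ⟪g, v₁⟫` is at most `2 s q`, where `s ≤ 1`
is the half-width of the band in the coordinate `⟪v₁, u⟫`. Rotation invariance of `σ` gives
`‖g‖ ≤ c`. Averaging over the great circle through `v₁` and a unit `w ⊥ v₁` (this is where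
`d ≥ 2` enters) compares the law of `⟪v₁, u⟫` with that of `cos θ`, giving `c ≤ 2/π` and
`2s/π ≤ q`. Hence `c (c - ⟪g, v₁⟫) ≤ 2q²`, and together with `‖g‖ ≤ c` and `2q ≤ c` the bound is
elementary algebra.
-/

section SphereUniform

variable {d : ℕ}

lemma sphereUniform_eq_zero_or_isProbabilityMeasure (d : ℕ) :
    sphereUniform d = 0 ∨ IsProbabilityMeasure (sphereUniform d) := by
  by_cases h0 : μH[(d : ℝ) - 1] (sphere (0 : EuclideanSpace ℝ (Fin d)) 1) = 0
  · left
    simp [sphereUniform, Measure.restrict_eq_zero.mpr h0]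
  by_cases htop : μH[(d : ℝ) - 1] (sphere (0 : EuclideanSpace ℝ (Fin d)) 1) = ⊤
  · left
    simp [sphereUniform, htop]
  · right
    exact ⟨by simp [sphereUniform, ENNReal.inv_mul_cancel h0 htop]⟩

lemma ae_norm_eq_one_sphereUniform (d : ℕ) : ∀ᵐ u ∂(sphereUniform d), ‖u‖ = 1 := by
  refine Measure.ae_smul_measure ?_ _
  filter_upwards [ae_restrict_mem isClosed_sphere.measurableSet] with u hu
  simpa using hu

lemma measurePreserving_sphereUniform
    (e : EuclideanSpace ℝ (Fin d) ≃ₗᵢ[ℝ] EuclideanSpace ℝ (Fin d)) :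
    MeasurePreserving e (sphereUniform d) (sphereUniform d) := by
  have h := (e.toIsometryEquiv.measurePreserving_hausdorffMeasure ((d : ℝ) - 1)).restrict_preimage
    (isClosed_sphere (x := (0 : EuclideanSpace ℝ (Fin d))) (ε := 1)).measurableSet
  have hpre : e.toIsometryEquiv ⁻¹' sphere 0 1 = sphere 0 1 := by simp
  rw [hpre] at h
  exact h.smul_measure _

lemma integral_comp_inner_sphereUniform {h₁ h₂ : EuclideanSpace ℝ (Fin d)} (h : ‖h₁‖ = ‖h₂‖)
    (f : ℝ → ℝ) :
    ∫ u, f ⟪h₁, u⟫ ∂(sphereUniform d) = ∫ u, f ⟪h₂, u⟫ ∂(sphereUniform d) := by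
  let e := (ℝ ∙ (h₁ - h₂))ᗮ.reflection
  have he : e h₁ = h₂ := Submodule.reflection_sub h
  calc ∫ u, f ⟪h₁, u⟫ ∂(sphereUniform d) = ∫ u, f ⟪e h₁, e u⟫ ∂(sphereUniform d) := by simp
    _ = ∫ u, f ⟪h₂, u⟫ ∂(sphereUniform d) := by
      rw [he]
      exact (measurePreserving_sphereUniform e).integral_comp' (f := e.toMeasurableEquiv)
        (fun u => f ⟪h₂, u⟫)

end SphereUniform

section Circle

open Real intervalIntegral

lemma mul_cos_add_mul_sin_eq (a b θ : ℝ) :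
    a * cos θ + b * sin θ = ‖(⟨a, b⟩ : ℂ)‖ * cos (θ - Complex.arg ⟨a, b⟩) := by
  have hcos := Complex.norm_mul_cos_arg ⟨a, b⟩
  have hsin := Complex.norm_mul_sin_arg ⟨a, b⟩
  rw [cos_sub]
  linear_combination (-cos θ) * hcos - sin θ * hsin

lemma norm_le_one_of_abs_mul_cos_add_mul_sin_le {a b : ℝ}
    (h : ∀ θ, |a * cos θ + b * sin θ| ≤ 1) : ‖(⟨a, b⟩ : ℂ)‖ ≤ 1 := by
  simpa [mul_cos_add_mul_sin_eq] using h (Complex.arg ⟨a, b⟩)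

lemma Function.Periodic.intervalIntegral_comp_sub_eq {f : ℝ → ℝ} {T : ℝ}
    (hf : Function.Periodic f T) (φ : ℝ) :
    ∫ x in 0..T, f (x - φ) = ∫ x in 0..T, f x := by
  simpa [integral_comp_sub_right, sub_eq_neg_add] using hf.intervalIntegral_add_eq (-φ) 0

lemma intervalIntegral_abs_cos : ∫ θ in 0..2 * π, |cos θ| = 4 := by
  have hper : Function.Periodic (fun θ => |cos θ|) π := fun θ => by simp [cos_add_pi]
  calc ∫ θ in 0..2 * π, |cos θ| = ∫ θ in -(π / 2)..-(π / 2) + (2 : ℤ) • π, |cos θ| := by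
        simpa [two_mul] using (hper.zsmul 2).intervalIntegral_add_eq 0 (-(π / 2))
    _ = 2 * ∫ θ in -(π / 2)..π / 2, cos θ := by
        rw [hper.intervalIntegral_add_zsmul_eq 2 _
          fun _ _ => continuous_cos.abs.intervalIntegrable _ _]
        rw [show -(π / 2) + π = π / 2 by ring, zsmul_eq_mul, Int.cast_ofNat]
        congr 1
        refine integral_congr fun θ hθ => abs_of_nonneg (cos_nonneg_of_mem_Icc ?_)
        rwa [Set.uIcc_of_le (by linarith [pi_pos])] at hθ
    _ = 4 := by norm_num [integral_cos]

lemma intervalIntegrable_indicator_one_comp {A : Set ℝ} (hA : MeasurableSet A) {f : ℝ → ℝ}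
    (hf : Measurable f) (a b : ℝ) :
    IntervalIntegrable (fun θ => A.indicator (1 : ℝ → ℝ) (f θ)) volume a b := by
  refine (intervalIntegrable_const (c := (1 : ℝ))).mono_fun'
    ((measurable_const.indicator hA).comp hf).aestronglyMeasurable (ae_of_all _ fun θ => ?_)
  simpa using norm_indicator_le_norm_self (1 : ℝ → ℝ) (f θ) (s := A)

lemma four_mul_le_intervalIntegral_indicator_cos {s : ℝ} (hs0 : 0 ≤ s) (hs1 : s ≤ 1) :
    4 * s ≤ ∫ θ in 0..2 * π, {t : ℝ | |t| ≤ s}.indicator (1 : ℝ → ℝ) (cos θ) := by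
  set f := fun θ => {t : ℝ | |t| ≤ s}.indicator (1 : ℝ → ℝ) (cos θ)
  have hA : MeasurableSet {t : ℝ | |t| ≤ s} := measurableSet_le (by fun_prop) measurable_const
  have hint := intervalIntegrable_indicator_one_comp hA continuous_cos.measurable
  have hper : Function.Periodic f π := fun θ => by simp [f, cos_add_pi, Set.indicator_apply]
  have hmid : ∫ θ in (π / 2 - s)..(π / 2 + s), f θ = 2 * s := by
    rw [integral_congr (g := fun _ => 1) fun θ hθ => ?_]
    · rw [intervalIntegral.integral_const, smul_eq_mul, mul_one]
      ring
    rw [Set.uIcc_of_le (by linarith)] at hθ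
    refine Set.indicator_of_mem ?_ _
    calc |cos θ| = |sin (π / 2 - θ)| := by rw [sin_pi_div_two_sub]
      _ ≤ |π / 2 - θ| := abs_sin_le_abs
      _ ≤ s := abs_le.mpr ⟨by linarith [hθ.2], by linarith [hθ.1]⟩
  have hπ := pi_gt_three
  calc 4 * s = 2 * ∫ θ in (π / 2 - s)..(π / 2 + s), f θ := by rw [hmid]; ring
    _ ≤ 2 * ∫ θ in 0..π, f θ := by
        gcongr
        refine integral_mono_interval (by linarith) (by linarith) (by linarith)
          (ae_of_all _ fun θ => ?_) (hint 0 π)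
        exact Set.indicator_nonneg (fun _ _ => zero_le_one) _
    _ = ∫ θ in 0..2 * π, f θ := by
        simpa using (hper.intervalIntegral_add_zsmul_eq 2 0 hint).symm

lemma intervalIntegral_abs_mul_cos_add_mul_sin (a b : ℝ) :
    ∫ θ in 0..2 * π, |a * cos θ + b * sin θ| = 4 * ‖(⟨a, b⟩ : ℂ)‖ := by
  simp_rw [mul_cos_add_mul_sin_eq a b, abs_mul, abs_norm, intervalIntegral.integral_const_mul]
  rw [(show Function.Periodic (fun θ => |cos θ|) (2 * π) from fun θ => by
    simp).intervalIntegral_comp_sub_eq, intervalIntegral_abs_cos, mul_comm]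

lemma four_mul_le_intervalIntegral_indicator_mul_cos_add_mul_sin {a b s : ℝ}
    (hab : ‖(⟨a, b⟩ : ℂ)‖ ≤ 1) (hs0 : 0 ≤ s) (hs1 : s ≤ 1) :
    4 * s ≤ ∫ θ in 0..2 * π, {t : ℝ | |t| ≤ s}.indicator (1 : ℝ → ℝ) (a * cos θ + b * sin θ) := by
  have hA : MeasurableSet {t : ℝ | |t| ≤ s} := measurableSet_le (by fun_prop) measurable_const
  set φ := Complex.arg ⟨a, b⟩
  have hper : Function.Periodic
      (fun θ => {t : ℝ | |t| ≤ s}.indicator (1 : ℝ → ℝ) (cos θ)) (2 * π) := fun θ => by simp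
  calc 4 * s ≤ ∫ θ in 0..2 * π, {t : ℝ | |t| ≤ s}.indicator (1 : ℝ → ℝ) (cos (θ - φ)) := by
        rw [hper.intervalIntegral_comp_sub_eq]
        exact four_mul_le_intervalIntegral_indicator_cos hs0 hs1
    _ ≤ ∫ θ in 0..2 * π, {t : ℝ | |t| ≤ s}.indicator (1 : ℝ → ℝ) (a * cos θ + b * sin θ) := by
        refine integral_mono_on (by positivity)
          (intervalIntegrable_indicator_one_comp hA (by fun_prop) _ _)
          (intervalIntegrable_indicator_one_comp hA (by fun_prop) _ _) fun θ _ => ?_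
        have hmono : |cos (θ - φ)| ≤ s → |‖(⟨a, b⟩ : ℂ)‖ * cos (θ - φ)| ≤ s := fun h => by
          rw [abs_mul, abs_norm]
          exact (mul_le_of_le_one_left (abs_nonneg _) hab).trans h
        rw [mul_cos_add_mul_sin_eq a b]
        simp only [Set.indicator_apply, Set.mem_ofPred_eq, Pi.one_apply]
        split_ifs with h₁ h₂ <;> first | exact absurd (hmono h₁) h₂ | norm_num

end Circle

section Rotation

open Real

variable {F : Type*} [NormedAddCommGroup F] [InnerProductSpace ℝ F]

lemma inner_cos_smul_add_sin_smul (v w u : F) (θ : ℝ) :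
    ⟪cos θ • v + sin θ • w, u⟫ = ⟪v, u⟫ * cos θ + ⟪w, u⟫ * sin θ := by
  rw [inner_add_left, real_inner_smul_left, real_inner_smul_left]
  ring

lemma norm_cos_smul_add_sin_smul {v w : F} (hv : ‖v‖ = 1) (hw : ‖w‖ = 1) (hvw : ⟪v, w⟫ = 0)
    (θ : ℝ) : ‖cos θ • v + sin θ • w‖ = 1 := by
  have h : ‖cos θ • v + sin θ • w‖ ^ 2 = 1 := by
    rw [sq, norm_add_sq_eq_norm_sq_add_norm_sq_real
      (by simp [real_inner_smul_left, real_inner_smul_right, hvw])]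
    simp [norm_smul, hv, hw, ← sq, cos_sq_add_sin_sq]
  exact (pow_eq_one_iff_of_nonneg (norm_nonneg _) two_ne_zero).mp h

lemma abs_inner_mul_cos_add_inner_mul_sin_le {v w u : F} (hv : ‖v‖ = 1) (hw : ‖w‖ = 1)
    (hvw : ⟪v, w⟫ = 0) (hu : ‖u‖ = 1) (θ : ℝ) : |⟪v, u⟫ * cos θ + ⟪w, u⟫ * sin θ| ≤ 1 := by
  simpa [inner_cos_smul_add_sin_smul, norm_cos_smul_add_sin_smul hv hw hvw, hu] using
    abs_real_inner_le_norm (cos θ • v + sin θ • w) u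

lemma exists_norm_eq_one_inner_eq_zero {d : ℕ} (hd : 2 ≤ d) (v : EuclideanSpace ℝ (Fin d)) :
    ∃ w : EuclideanSpace ℝ (Fin d), ‖w‖ = 1 ∧ ⟪v, w⟫ = 0 := by
  have hne : (ℝ ∙ v)ᗮ ≠ ⊥ := by
    intro h
    have := (ℝ ∙ v).finrank_add_finrank_orthogonal
    rw [h, finrank_bot, finrank_euclideanSpace_fin] at this
    have : Module.finrank ℝ (ℝ ∙ v) ≤ 1 := (finrank_span_le_card ({v} : Set _)).trans (by simp)
    lia
  obtain ⟨w, hw, hw0⟩ := Submodule.exists_mem_ne_zero_of_ne_bot hne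
  refine ⟨‖w‖⁻¹ • w, norm_smul_inv_norm hw0, ?_⟩
  rw [real_inner_smul_right, Submodule.mem_orthogonal_singleton_iff_inner_right.mp hw, mul_zero]

end Rotation

section CircleAverage

open Real

variable {d : ℕ} [IsProbabilityMeasure (sphereUniform d)] {v w : EuclideanSpace ℝ (Fin d)}

lemma integrable_comp_inner_mul_cos_add_inner_mul_sin (hv : ‖v‖ = 1) (hw : ‖w‖ = 1)
    (hvw : ⟪v, w⟫ = 0) {F : ℝ → ℝ} (hF : Measurable F) {C : ℝ}
    (hC : ∀ t, |t| ≤ 1 → |F t| ≤ C) :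
    Integrable (fun p : ℝ × EuclideanSpace ℝ (Fin d) => F (⟪v, p.2⟫ * cos p.1 + ⟪w, p.2⟫ * sin p.1))
      ((volume.restrict (Set.Ioc 0 (2 * π))).prod (sphereUniform d)) := by
  refine .of_bound (hF.comp (by fun_prop)).aestronglyMeasurable C ?_
  filter_upwards [Measure.quasiMeasurePreserving_snd.ae (ae_norm_eq_one_sphereUniform d)]
    with p hp
  exact hC _ (abs_inner_mul_cos_add_inner_mul_sin_le hv hw hvw hp p.1)

/-- Averaging over the directions `cos θ • v + sin θ • w`, all of which have the same law
as `v` under `σ`. -/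
lemma two_pi_mul_integral_comp_inner_sphereUniform (hv : ‖v‖ = 1) (hw : ‖w‖ = 1)
    (hvw : ⟪v, w⟫ = 0) {F : ℝ → ℝ} (hF : Measurable F) {C : ℝ}
    (hC : ∀ t, |t| ≤ 1 → |F t| ≤ C) :
    2 * π * ∫ u, F ⟪v, u⟫ ∂(sphereUniform d) =
      ∫ u, (∫ θ in 0..2 * π, F (⟪v, u⟫ * cos θ + ⟪w, u⟫ * sin θ)) ∂(sphereUniform d) := by
  calc 2 * π * ∫ u, F ⟪v, u⟫ ∂(sphereUniform d)
      = ∫ θ in 0..2 * π, ∫ u, F ⟪v, u⟫ ∂(sphereUniform d) := by simp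
    _ = ∫ θ in 0..2 * π, ∫ u, F (⟪v, u⟫ * cos θ + ⟪w, u⟫ * sin θ) ∂(sphereUniform d) := by
        refine intervalIntegral.integral_congr fun θ _ => ?_
        simp_rw [← inner_cos_smul_add_sin_smul]
        exact integral_comp_inner_sphereUniform
          (by rw [norm_cos_smul_add_sin_smul hv hw hvw, hv]) F |>.symm
    _ = ∫ u, (∫ θ in 0..2 * π, F (⟪v, u⟫ * cos θ + ⟪w, u⟫ * sin θ)) ∂(sphereUniform d) := by
        simp only [intervalIntegral.integral_of_le two_pi_pos.le]
        exact integral_integral_swap (f := fun θ u => F (⟪v, u⟫ * cos θ + ⟪w, u⟫ * sin θ))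
          (integrable_comp_inner_mul_cos_add_inner_mul_sin hv hw hvw hF hC)

lemma integral_abs_inner_sphereUniform_le (hd : 2 ≤ d) (hv : ‖v‖ = 1) :
    ∫ u, |⟪v, u⟫| ∂(sphereUniform d) ≤ 2 / π := by
  obtain ⟨w, hw, hvw⟩ := exists_norm_eq_one_inner_eq_zero hd v
  have h := two_pi_mul_integral_comp_inner_sphereUniform hv hw hvw continuous_abs.measurable
    (C := 1) fun t ht => by rwa [abs_abs]
  have hle : ∫ u, (∫ θ in 0..2 * π, |⟪v, u⟫ * cos θ + ⟪w, u⟫ * sin θ|) ∂(sphereUniform d) ≤ 4 :=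
    calc _ ≤ ∫ _, (4 : ℝ) ∂(sphereUniform d) := by
          refine integral_mono_of_nonneg (ae_of_all _ fun u => intervalIntegral.integral_nonneg
            two_pi_pos.le fun _ _ => abs_nonneg _) (integrable_const _) ?_
          filter_upwards [ae_norm_eq_one_sphereUniform d] with u hu
          rw [intervalIntegral_abs_mul_cos_add_mul_sin]
          linarith [norm_le_one_of_abs_mul_cos_add_mul_sin_le
            (abs_inner_mul_cos_add_inner_mul_sin_le hv hw hvw hu)]
      _ = 4 := by simp
  rw [le_div_iff₀ pi_pos]
  linarith

lemma two_div_pi_mul_le_measureReal_sphereUniform (hd : 2 ≤ d) (hv : ‖v‖ = 1) {s : ℝ}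
    (hs0 : 0 ≤ s) (hs1 : s ≤ 1) :
    2 / π * s ≤ (sphereUniform d).real {u | |⟪v, u⟫| ≤ s} := by
  obtain ⟨w, hw, hvw⟩ := exists_norm_eq_one_inner_eq_zero hd v
  set A := {t : ℝ | |t| ≤ s}
  have hA : MeasurableSet A := measurableSet_le (by fun_prop) measurable_const
  have hF : Measurable (A.indicator (1 : ℝ → ℝ)) := measurable_const.indicator hA
  have hC : ∀ t, |t| ≤ 1 → |A.indicator (1 : ℝ → ℝ) t| ≤ 1 := fun t _ => by
    simpa using norm_indicator_le_norm_self (1 : ℝ → ℝ) t (s := A)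
  have h := two_pi_mul_integral_comp_inner_sphereUniform hv hw hvw hF hC
  have hint : Integrable (fun u => ∫ θ in 0..2 * π,
      A.indicator (1 : ℝ → ℝ) (⟪v, u⟫ * cos θ + ⟪w, u⟫ * sin θ)) (sphereUniform d) := by
    simp only [intervalIntegral.integral_of_le two_pi_pos.le]
    exact (integrable_comp_inner_mul_cos_add_inner_mul_sin hv hw hvw hF hC).integral_prod_right
  have hge : 4 * s ≤ ∫ u, (∫ θ in 0..2 * π,
      A.indicator (1 : ℝ → ℝ) (⟪v, u⟫ * cos θ + ⟪w, u⟫ * sin θ)) ∂(sphereUniform d) :=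
    calc 4 * s = ∫ _, 4 * s ∂(sphereUniform d) := by simp
      _ ≤ _ := by
          refine integral_mono_ae (integrable_const _) hint ?_
          filter_upwards [ae_norm_eq_one_sphereUniform d] with u hu
          exact four_mul_le_intervalIntegral_indicator_mul_cos_add_mul_sin
            (norm_le_one_of_abs_mul_cos_add_mul_sin_le
              (abs_inner_mul_cos_add_inner_mul_sin_le hv hw hvw hu)) hs0 hs1
  have hq : ∫ u, A.indicator (1 : ℝ → ℝ) ⟪v, u⟫ ∂(sphereUniform d) =
      (sphereUniform d).real {u | |⟪v, u⟫| ≤ s} :=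
    integral_indicator_one (measurableSet_le (by fun_prop) measurable_const)
  rw [div_mul_eq_mul_div, div_le_iff₀ pi_pos, ← hq]
  linarith

end CircleAverage

section SignEstimator

variable {d : ℕ} [IsProbabilityMeasure (sphereUniform d)]
  {φ : EuclideanSpace ℝ (Fin d) → ℝ}

lemma integrable_smul_sphereUniform (hφm : Measurable φ) (hφ : ∀ u, |φ u| ≤ 1) :
    Integrable (fun u => φ u • u) (sphereUniform d) := by
  refine .of_bound (hφm.smul measurable_id).aestronglyMeasurable 1 ?_
  filter_upwards [ae_norm_eq_one_sphereUniform d] with u hu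
  simpa [norm_smul, hu] using hφ u

lemma inner_integral_smul_sphereUniform (hφm : Measurable φ) (hφ : ∀ u, |φ u| ≤ 1)
    (h : EuclideanSpace ℝ (Fin d)) :
    ⟪∫ u, φ u • u ∂(sphereUniform d), h⟫ = ∫ u, φ u * ⟪h, u⟫ ∂(sphereUniform d) := by
  rw [real_inner_comm, ← integral_inner (integrable_smul_sphereUniform hφm hφ) h]
  simp only [real_inner_smul_right]

lemma integrable_mul_inner_sphereUniform (hφm : Measurable φ) (hφ : ∀ u, |φ u| ≤ 1)
    (h : EuclideanSpace ℝ (Fin d)) :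
    Integrable (fun u => φ u * ⟪h, u⟫) (sphereUniform d) := by
  simpa only [real_inner_smul_right] using
    (integrable_smul_sphereUniform hφm hφ).const_inner (𝕜 := ℝ) h

lemma integrable_abs_inner_sphereUniform (h : EuclideanSpace ℝ (Fin d)) :
    Integrable (fun u => |⟪h, u⟫|) (sphereUniform d) := by
  simpa using (integrable_mul_inner_sphereUniform (φ := 1) measurable_const (by simp) h).abs

lemma norm_integral_smul_le_sphereUniform (hφm : Measurable φ) (hφ : ∀ u, |φ u| ≤ 1)
    {v : EuclideanSpace ℝ (Fin d)} (hv : ‖v‖ = 1) :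
    ‖∫ u, φ u • u ∂(sphereUniform d)‖ ≤ ∫ u, |⟪v, u⟫| ∂(sphereUniform d) := by
  set g := ∫ u, φ u • u ∂(sphereUniform d)
  have key : ‖g‖ * ‖g‖ ≤ ‖g‖ * ∫ u, |⟪v, u⟫| ∂(sphereUniform d) :=
    calc ‖g‖ * ‖g‖ = ∫ u, φ u * ⟪g, u⟫ ∂(sphereUniform d) := by
          rw [← real_inner_self_eq_norm_mul_norm, inner_integral_smul_sphereUniform hφm hφ]
      _ ≤ ∫ u, |⟪g, u⟫| ∂(sphereUniform d) := by
          refine integral_mono (integrable_mul_inner_sphereUniform hφm hφ g)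
            (integrable_abs_inner_sphereUniform g) fun u => ?_
          calc φ u * ⟪g, u⟫ ≤ |φ u| * |⟪g, u⟫| := by rw [← abs_mul]; exact le_abs_self _
            _ ≤ |⟪g, u⟫| := mul_le_of_le_one_left (abs_nonneg _) (hφ u)
      _ = ∫ u, |⟪‖g‖ • v, u⟫| ∂(sphereUniform d) :=
          integral_comp_inner_sphereUniform (by simp [norm_smul, hv]) _
      _ = ‖g‖ * ∫ u, |⟪v, u⟫| ∂(sphereUniform d) := by
          simp [real_inner_smul_left, abs_mul, integral_const_mul]
  rcases (norm_nonneg g).eq_or_lt with hg | hg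
  · rw [← hg]
    exact integral_nonneg fun u => abs_nonneg _
  · exact le_of_mul_le_mul_left key hg

lemma sub_inner_integral_smul_le_sphereUniform (hφm : Measurable φ) (hφ : ∀ u, |φ u| ≤ 1)
    {v : EuclideanSpace ℝ (Fin d)} (hv : ‖v‖ = 1) {τ : ℝ}
    (hagree : ∀ u, ‖u‖ = 1 → τ < |⟪v, u⟫| → φ u * ⟪v, u⟫ = |⟪v, u⟫|) :
    ∫ u, |⟪v, u⟫| ∂(sphereUniform d) - ⟪∫ u, φ u • u ∂(sphereUniform d), v⟫ ≤
      2 * min τ 1 * (sphereUniform d).real {u | |⟪v, u⟫| ≤ τ} := by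
  set A := {u : EuclideanSpace ℝ (Fin d) | |⟪v, u⟫| ≤ τ}
  have hA : MeasurableSet A := measurableSet_le (by fun_prop) measurable_const
  have hpt : ∀ᵐ u ∂(sphereUniform d),
      |⟪v, u⟫| - φ u * ⟪v, u⟫ ≤ A.indicator (fun _ => 2 * min τ 1) u := by
    filter_upwards [ae_norm_eq_one_sphereUniform d] with u hu
    by_cases huA : u ∈ A
    · have h1 : |⟪v, u⟫| ≤ 1 := by
        simpa [hv, hu] using abs_real_inner_le_norm v u
      have h2 : -(φ u * ⟪v, u⟫) ≤ |⟪v, u⟫| := by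
        calc -(φ u * ⟪v, u⟫) ≤ |φ u| * |⟪v, u⟫| := by rw [← abs_mul]; exact neg_le_abs _
          _ ≤ |⟪v, u⟫| := mul_le_of_le_one_left (abs_nonneg _) (hφ u)
      rw [Set.indicator_of_mem huA]
      have := le_min (show |⟪v, u⟫| ≤ τ from huA) h1
      linarith
    · rw [Set.indicator_of_notMem huA, hagree u hu (not_le.mp huA), sub_self]
  calc ∫ u, |⟪v, u⟫| ∂(sphereUniform d) - ⟪∫ u, φ u • u ∂(sphereUniform d), v⟫
      = ∫ u, (|⟪v, u⟫| - φ u * ⟪v, u⟫) ∂(sphereUniform d) := by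
        rw [inner_integral_smul_sphereUniform hφm hφ, integral_sub
          (integrable_abs_inner_sphereUniform v) (integrable_mul_inner_sphereUniform hφm hφ v)]
    _ ≤ ∫ u, A.indicator (fun _ => 2 * min τ 1) u ∂(sphereUniform d) :=
        integral_mono_ae ((integrable_abs_inner_sphereUniform v).sub
          (integrable_mul_inner_sphereUniform hφm hφ v)) ((integrable_const _).indicator hA) hpt
    _ = 2 * min τ 1 * (sphereUniform d).real A := by
        rw [integral_indicator hA, setIntegral_const, smul_eq_mul, mul_comm]

theorem mul_sub_inner_integral_smul_le_sphereUniform (hd : 2 ≤ d) (hφm : Measurable φ)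
    (hφ : ∀ u, |φ u| ≤ 1) {v : EuclideanSpace ℝ (Fin d)} (hv : ‖v‖ = 1) {τ : ℝ} (hτ : 0 ≤ τ)
    (hagree : ∀ u, ‖u‖ = 1 → τ < |⟪v, u⟫| → φ u * ⟪v, u⟫ = |⟪v, u⟫|) :
    (∫ u, |⟪v, u⟫| ∂(sphereUniform d)) *
        (∫ u, |⟪v, u⟫| ∂(sphereUniform d) - ⟪∫ u, φ u • u ∂(sphereUniform d), v⟫) ≤
      2 * (sphereUniform d).real {u | |⟪v, u⟫| ≤ τ} ^ 2 := by
  set c := ∫ u, |⟪v, u⟫| ∂(sphereUniform d)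
  set q := (sphereUniform d).real {u | |⟪v, u⟫| ≤ τ}
  set s := min τ 1
  have hs0 : 0 ≤ s := le_min hτ zero_le_one
  have hc0 : 0 ≤ c := integral_nonneg fun u => abs_nonneg _
  have hq0 : 0 ≤ q := measureReal_nonneg
  have hcs : c * s ≤ q :=
    calc c * s ≤ 2 / Real.pi * s :=
          mul_le_mul_of_nonneg_right (integral_abs_inner_sphereUniform_le hd hv) hs0
      _ ≤ (sphereUniform d).real {u | |⟪v, u⟫| ≤ s} :=
          two_div_pi_mul_le_measureReal_sphereUniform hd hv hs0 (min_le_right _ _)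
      _ ≤ q := measureReal_mono fun u (hu : |⟪v, u⟫| ≤ s) => hu.trans (min_le_left _ _)
  calc c * (c - ⟪∫ u, φ u • u ∂(sphereUniform d), v⟫) ≤ c * (2 * s * q) :=
        mul_le_mul_of_nonneg_left (sub_inner_integral_smul_le_sphereUniform hφm hφ hv hagree) hc0
    _ = 2 * q * (c * s) := by ring
    _ ≤ 2 * q ^ 2 := by nlinarith

end SignEstimator

lemma measurable_sgn : Measurable sgn :=
  measurable_const.ite (measurableSet_lt measurable_const measurable_id) measurable_const

lemma abs_sgn (t : ℝ) : |sgn t| = 1 := by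
  unfold sgn
  split_ifs <;> norm_num

section Smooth

variable {F : Type*} [NormedAddCommGroup F] [InnerProductSpace ℝ F] [CompleteSpace F]
  {S : F → ℝ} {L : ℝ}

lemma abs_sub_sub_inner_gradient_le (hS : Differentiable ℝ S)
    (hLip : ∀ x y, ‖gradient S x - gradient S y‖ ≤ L * ‖x - y‖) (x h : F) :
    |S (x + h) - S x - ⟪gradient S x, h⟫| ≤ L / 2 * ‖h‖ ^ 2 := by
  have hcont : Continuous (gradient S) :=
    (LipschitzWith.of_dist_le' (K := L) (by simpa [dist_eq_norm] using hLip)).continuous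
  set f := fun t : ℝ => ⟪gradient S (x + t • h), h⟫
  have hf : Continuous f := by fun_prop
  have hderiv : ∀ t, HasDerivAt (fun t : ℝ => S (x + t • h)) (f t) t := fun t => by
    have hline : HasDerivAt (fun t : ℝ => x + t • h) h t := by
      simpa using ((hasDerivAt_id t).smul_const h).const_add x
    simpa [f, Function.comp_def] using
      (hS (x + t • h)).hasGradientAt.hasFDerivAt.comp_hasDerivAt t hline
  have hftc : S (x + h) - S x - ⟪gradient S x, h⟫ = ∫ t in 0..1, (f t - ⟪gradient S x, h⟫) := by
    rw [intervalIntegral.integral_sub (hf.intervalIntegrable 0 1) intervalIntegrable_const,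
      intervalIntegral.integral_eq_sub_of_hasDerivAt (fun t _ => hderiv t)
        (hf.intervalIntegrable 0 1)]
    simp
  have hbound : ∀ t ∈ Set.Icc (0 : ℝ) 1, |f t - ⟪gradient S x, h⟫| ≤ L * ‖h‖ ^ 2 * t := by
    intro t ht
    calc |f t - ⟪gradient S x, h⟫|
        = |⟪gradient S (x + t • h) - gradient S x, h⟫| := by rw [inner_sub_left]
      _ ≤ ‖gradient S (x + t • h) - gradient S x‖ * ‖h‖ := abs_real_inner_le_norm _ _
      _ ≤ L * ‖x + t • h - x‖ * ‖h‖ := by gcongr; exact hLip _ _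
      _ = L * ‖h‖ ^ 2 * t := by
          rw [add_sub_cancel_left, norm_smul, Real.norm_of_nonneg ht.1]
          ring
  calc |S (x + h) - S x - ⟪gradient S x, h⟫|
      ≤ ∫ t in 0..1, |f t - ⟪gradient S x, h⟫| := by
        rw [hftc]
        exact intervalIntegral.abs_integral_le_integral_abs zero_le_one
    _ ≤ ∫ t in 0..1, L * ‖h‖ ^ 2 * t :=
        intervalIntegral.integral_mono_on zero_le_one
          ((hf.sub continuous_const).abs.intervalIntegrable 0 1)
          ((continuous_const_mul (L * ‖h‖ ^ 2)).intervalIntegrable 0 1) hbound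
    _ = L / 2 * ‖h‖ ^ 2 := by
        rw [intervalIntegral.integral_const_mul, integral_id]
        ring

lemma sgn_mul_inner_gradient_eq_abs (hS : Differentiable ℝ S)
    (hLip : ∀ x y, ‖gradient S x - gradient S y‖ ≤ L * ‖x - y‖) {x u : F} (hx : S x = 0)
    {δ : ℝ} (hδ : 0 < δ) (hu : ‖u‖ = 1) (hband : L * δ / 2 < |⟪gradient S x, u⟫|) :
    sgn (S (x + δ • u)) * ⟪gradient S x, u⟫ = |⟪gradient S x, u⟫| := by
  have h := abs_sub_sub_inner_gradient_le hS hLip x (δ • u)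
  rw [hx, sub_zero, norm_smul, hu, real_inner_smul_right, Real.norm_of_nonneg hδ.le,
    abs_le] at h
  have hgap : L * δ ^ 2 / 2 < δ * |⟪gradient S x, u⟫| := by nlinarith
  rcases lt_or_ge 0 ⟪gradient S x, u⟫ with hpos | hneg
  · rw [abs_of_pos hpos] at hgap ⊢
    have : 0 < S (x + δ • u) := by nlinarith
    simp [sgn, this]
  · rw [abs_of_nonpos hneg] at hgap ⊢
    have : ¬ 0 < S (x + δ • u) := by nlinarith
    simp [sgn, this]

end Smooth

lemma one_sub_half_mul_sq_mul_le {a n c q : ℝ} (han : |a| ≤ n) (hnc : n ≤ c) (hq0 : 0 ≤ q)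
    (hqc : 2 * q ≤ c) (hdef : c * (c - a) ≤ 2 * q ^ 2) :
    (1 - 1 / 2 * (3 * q / c) ^ 2) * n ≤ a := by
  have hn0 : 0 ≤ n := (abs_nonneg a).trans han
  rcases (hn0.trans hnc).eq_or_lt with hc | hc
  · have hn : n = 0 := le_antisymm (hnc.trans hc.ge) hn0
    simp [hn, abs_nonpos_iff.mp (hn ▸ han)]
  set r := q / c
  have hq : q = r * c := (div_mul_cancel₀ q hc.ne').symm
  have hr0 : 0 ≤ r := div_nonneg hq0 hc.le
  have hr1 : r ≤ 1 / 2 := by rw [div_le_iff₀ hc]; linarith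
  have ha : c * (1 - 2 * r ^ 2) ≤ a := by
    rw [hq] at hdef
    nlinarith
  rw [mul_div_assoc]
  rcases le_total 0 (1 - 1 / 2 * (3 * r) ^ 2) with hk | hk
  · calc (1 - 1 / 2 * (3 * r) ^ 2) * n ≤ (1 - 1 / 2 * (3 * r) ^ 2) * c := by gcongr
      _ ≤ c * (1 - 2 * r ^ 2) := by nlinarith
      _ ≤ a := ha
  · calc (1 - 1 / 2 * (3 * r) ^ 2) * n ≤ 0 := mul_nonpos_of_nonpos_of_nonneg hk hn0
      _ ≤ c * (1 - 2 * r ^ 2) := by nlinarith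
      _ ≤ a := ha

/-- with `v₁ = ∇S(x_t)/‖∇S(x_t)‖`, `c = ∫_S |⟪v₁,u⟫| dσ` and
`q(δ) = σ({u : |⟪∇S(x_t),u⟫| ≤ Lδ/2})`, if `2q(δ) ≤ c` then
`⟪g(δ), v₁⟫ ≥ (1 − (1/2)(3q(δ)/c)²) ‖g(δ)‖`. -/
theorem stmt_2 (d : ℕ) (hd : 2 ≤ d) (L : ℝ) (hL : 0 < L)
    (S : EuclideanSpace ℝ (Fin d) → ℝ) (hS : Differentiable ℝ S)
    (hLip : ∀ x y : EuclideanSpace ℝ (Fin d),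
      ‖gradient S x - gradient S y‖ ≤ L * ‖x - y‖)
    (xt : EuclideanSpace ℝ (Fin d)) (hxt : S xt = 0) (hgrad : gradient S xt ≠ 0)
    (v₁ : EuclideanSpace ℝ (Fin d)) (hv₁ : v₁ = ‖gradient S xt‖⁻¹ • gradient S xt)
    (c : ℝ) (hc : c = ∫ u, |⟪v₁, u⟫| ∂(sphereUniform d))
    (q : ℝ → ℝ)
    (hq : ∀ δ : ℝ, q δ =
      ((sphereUniform d) {u | |⟪gradient S xt, u⟫| ≤ L * δ / 2}).toReal)
    (δ : ℝ) (hδ : 0 < δ) (hband : 2 * q δ ≤ c) :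
    ⟪gEst d S xt δ, v₁⟫ ≥ (1 - (1 / 2) * (3 * q δ / c) ^ 2) * ‖gEst d S xt δ‖ := by
  rcases sphereUniform_eq_zero_or_isProbabilityMeasure d with h0 | _
  · simp [gEst, h0]
  set G := gradient S xt
  have hN : 0 < ‖G‖ := norm_pos_iff.mpr hgrad
  have hv : ‖v₁‖ = 1 := by rw [hv₁, norm_smul, norm_inv, norm_norm, inv_mul_cancel₀ hN.ne']
  have hinner : ∀ u, ⟪G, u⟫ = ‖G‖ * ⟪v₁, u⟫ := fun u => by
    rw [hv₁, real_inner_smul_left, mul_inv_cancel_left₀ hN.ne']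
  set τ := L * δ / 2 / ‖G‖
  have hφm : Measurable fun u => sgn (S (xt + δ • u)) :=
    measurable_sgn.comp (hS.continuous.comp (by fun_prop)).measurable
  have hφ : ∀ u, |sgn (S (xt + δ • u))| ≤ 1 := fun u => (abs_sgn _).le
  have hagree : ∀ u, ‖u‖ = 1 → τ < |⟪v₁, u⟫| →
      sgn (S (xt + δ • u)) * ⟪v₁, u⟫ = |⟪v₁, u⟫| := by
    intro u hu hτu
    have h := sgn_mul_inner_gradient_eq_abs hS hLip hxt hδ hu
      (by rwa [hinner, abs_mul, abs_norm, ← div_lt_iff₀' hN])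
    rw [hinner, abs_mul, abs_norm, mul_left_comm] at h
    exact mul_left_cancel₀ hN.ne' h
  have hset : {u | |⟪v₁, u⟫| ≤ τ} = {u | |⟪G, u⟫| ≤ L * δ / 2} := by
    ext u
    rw [Set.mem_ofPred_eq, Set.mem_ofPred_eq, hinner, abs_mul, abs_norm, le_div_iff₀' hN]
  have hdef := mul_sub_inner_integral_smul_le_sphereUniform hd hφm hφ hv (by positivity) hagree
  rw [← hc, measureReal_def, hset, ← hq δ] at hdef
  refine one_sub_half_mul_sq_mul_le ?_ (hc ▸ norm_integral_smul_le_sphereUniform hφm hφ hv)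
    (hq δ ▸ ENNReal.toReal_nonneg) hband hdef
  simpa [hv] using abs_real_inner_le_norm (gEst d S xt δ) v₁
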